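/- Let J = J[v : dj, α] be obtained from a safe justification J₀ = (V, D, H) by an executable Justify step in the case H(v) = α (i.e., dj wins v for H(v) under H and jl(dj) ≥ jl(v) if v is unjustified, jl(dj) > jl(v) if v is justified). Then for every node w, jl_{J}(w) ≥ jl_{J₀}(w): no node's justification level decreases. -/

import Mathlib

attribute [local instance] Classical.propDecidable

noncomputable section

/-- A parity game: an edge relation `E`, an owner function, a priority
function; every node has at least one outgoing edge. -/
structure ParityGame (V : Type*) where
  E : V → V → Prop
  owner : V → Fin 2
  pr : V → ℕ
  exists_succ : ∀ v, ∃ w, E v w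

namespace ParityGame

variable {V : Type*}

/-- An infinite sequence of nodes following the relation `R`. -/
def IsInfPath (R : V → V → Prop) (π : ℕ → V) : Prop :=
  ∀ i, R (π i) (π (i + 1))

/-- `ρ 0, …, ρ n` is a finite sequence of nodes following `R`. -/
def IsFinPath (R : V → V → Prop) (ρ : ℕ → V) (n : ℕ) : Prop :=
  ∀ i < n, R (ρ i) (ρ (i + 1))

/-- A cycle following `R`: a nonempty finite path ending in its starting node. -/
def IsCycle (R : V → V → Prop) (ρ : ℕ → V) (n : ℕ) : Prop :=
  0 < n ∧ IsFinPath R ρ n ∧ ρ n = ρ 0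

/-- `w` is reachable from `v` following `R` (in zero or more steps). -/
def Reaches (R : V → V → Prop) (v w : V) : Prop :=
  Relation.ReflTransGen R v w

open Fin.NatCast in
/-- The infinite play `π` is won by player `α`: the highest priority
occurring infinitely often in the play has parity `α`. -/
def InfWonBy (G : ParityGame V) (π : ℕ → V) (α : Fin 2) : Prop :=
  ∃ p : ℕ, {i | G.pr (π i) = p}.Infinite ∧
    (∀ q : ℕ, {i | G.pr (π i) = q}.Infinite → q ≤ p) ∧ (p : Fin 2) = α

/-- A play is consistent with a (partial, memoryless) strategy given as a set
of edges: whenever the play is at a node where the strategy selects an edge,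
the play follows that edge. -/
def Consistent (σ : V → V → Prop) (π : ℕ → V) : Prop :=
  ∀ i u, σ (π i) u → π (i + 1) = u

/-- Consistency of a finite play `ρ 0, …, ρ n` with a strategy. -/
def ConsistentFin (σ : V → V → Prop) (ρ : ℕ → V) (n : ℕ) : Prop :=
  ∀ i < n, ∀ u, σ (ρ i) u → ρ (i + 1) = u

open Fin.NatCast in
/-- The default hypothesis: each node is won by the parity of its priority. -/
def Hd (G : ParityGame V) (v : V) : Fin 2 := (G.pr v : Fin 2)

/-- `dj` is a direct justification for player `α` to win node `v`: a set
containing exactly one outgoing edge of `v` if `α` owns `v`, and all outgoing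
edges of `v` otherwise. -/
def IsDJ (G : ParityGame V) (v : V) (α : Fin 2) (dj : Set (V × V)) : Prop :=
  (G.owner v = α → ∃ w, G.E v w ∧ dj = {(v, w)}) ∧
  (G.owner v ≠ α → dj = {p | p.1 = v ∧ G.E v p.2})

/-- `dj` wins `v` for `α` under hypothesis `H`. -/
def WinsDJ (G : ParityGame V) (H : V → Fin 2) (v : V) (α : Fin 2)
    (dj : Set (V × V)) : Prop :=
  G.IsDJ v α dj ∧ ∀ p ∈ dj, H p.2 = α

/-- The parity game obtained from `G` and the parameter function `P` by
replacing, in every parameter `v`, the outgoing edges of `v` by the self-loop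
`(v, v)` and the priority of `v` by its assigned winner `P v`. -/
def paramGame (G : ParityGame V) (P : V → Option (Fin 2)) : ParityGame V where
  E := fun v w => if P v = none then G.E v w else w = v
  owner := G.owner
  pr := fun v => (P v).elim (G.pr v) Fin.val
  exists_succ := fun v => by
    by_cases h : P v = none
    · obtain ⟨w, hw⟩ := G.exists_succ v
      exact ⟨w, by simp [h, hw]⟩
    · exact ⟨v, by simp [h]⟩

/-- A justification for `G`: a subgraph `D` together with a hypothesis `H`. -/
structure Justification (G : ParityGame V) where
  D : V → V → Prop
  H : V → Fin 2

variable {G : ParityGame V}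

namespace Justification

/-- `v` is justified in `J`: it has an outgoing edge in `D`. -/
def Justified (J : Justification G) (v : V) : Prop := ∃ w, J.D v w

/-- The set of outgoing edges of `v` in `D`. -/
def outEdges (J : Justification G) (v : V) : Set (V × V) :=
  {p | p.1 = v ∧ J.D v p.2}

/-- `J` is weakly winning: the outgoing edges of every justified node `v`
form a direct justification winning `v` for `H v` under `H`. -/
def WeaklyWinning (J : Justification G) : Prop :=
  ∀ v, J.Justified v → G.WinsDJ J.H v (J.H v) (J.outEdges v)

/-- `J` is winning: weakly winning, and every infinite path in `D` is a play
of `G` won by the hypothetical winner of its nodes. -/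
def Winning (J : Justification G) : Prop :=
  J.WeaklyWinning ∧
    ∀ π : ℕ → V, IsInfPath J.D π → G.InfWonBy π (J.H (π 0))

/-- The parameter function `P_J`: the restriction of `H` to the unjustified
nodes of `J`. -/
def param (J : Justification G) (v : V) : Option (Fin 2) :=
  if J.Justified v then none else some (J.H v)

/-- The strategy `σ_{J,α}`: the set of edges `(v, w) ∈ D` with
`O v = H v = α`. -/
def strat (J : Justification G) (α : Fin 2) : V → V → Prop :=
  fun v w => J.D v w ∧ G.owner v = α ∧ J.H v = α

/-- `Par_J v`: the parameters (unjustified nodes) reachable from `v` in `D`. -/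
def Par (J : Justification G) (v : V) : Set V :=
  {w | Reaches J.D v w ∧ ¬ J.Justified w}

/-- The justification level of `v`: the minimal priority of a parameter
reachable from `v`, and `⊤` (`+∞`) if there is none. -/
def jl (J : Justification G) (v : V) : ℕ∞ :=
  sInf ((fun w => (G.pr w : ℕ∞)) '' J.Par v)

/-- The justification level of a direct justification: the minimum of the
justification levels of the targets of its edges. -/
def jlDJ (J : Justification G) (dj : Set (V × V)) : ℕ∞ :=
  sInf ((fun p : V × V => J.jl p.2) '' dj)

/-- `J` is safe: winning, unjustified nodes have their default winner as
hypothesis, and the justification level of every node is at least its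
priority. -/
def Safe (J : Justification G) : Prop :=
  J.Winning ∧ (∀ v, ¬ J.Justified v → J.H v = G.Hd v) ∧
    ∀ v, (G.pr v : ℕ∞) ≤ J.jl v

/-- `J[v : dj, α]`: replace the outgoing `D`-edges of `v` by `dj` and set
`H v := α`. -/
def update (J : Justification G) (v : V) (dj : Set (V × V)) (α : Fin 2) :
    Justification G where
  D := fun x y => if x = v then (x, y) ∈ dj else J.D x y
  H := fun x => if x = v then α else J.H x

/-- `J[v : ∅, Hf v | v ∈ S]`: remove the direct justification of every
`v ∈ S` and set `H v := Hf v`. -/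
def resetAll (J : Justification G) (S : Set V) (Hf : V → Fin 2) :
    Justification G where
  D := fun x y => if x ∈ S then False else J.D x y
  H := fun x => if x ∈ S then Hf x else J.H x

/-- `s_i(J)`: the number of justified nodes of justification level `i`. -/
def size (J : Justification G) (i : ℕ∞) : ℕ :=
  {v | J.Justified v ∧ J.jl v = i}.ncard

end Justification

/-- The preconditions of the operation `Justify(J, v, dj)`. -/
def Executable (G : ParityGame V) (J : Justification G) (v : V)
    (dj : Set (V × V)) : Prop :=
  J.Safe ∧ (∃ α, G.WinsDJ J.H v α dj) ∧
    (if J.Justified v then J.jl v < J.jlDJ dj else J.jl v ≤ J.jlDJ dj)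

/-- The operation `Justify(J, v, dj)`, where `α` is the player winning `v`
by `dj`: if `H v = α` this is `J[v : dj, α]`; otherwise all nodes reaching
`v` in `D` are reset to their default winner and then `v` gets `dj`. -/
def justify (G : ParityGame V) (J : Justification G) (v : V)
    (dj : Set (V × V)) (α : Fin 2) : Justification G :=
  if J.H v = α then J.update v dj α
  else (J.resetAll {w | Reaches J.D w v} G.Hd).update v dj α

/-- The empty justification `(V, ∅, H_d)`. -/
def Justification.empty (G : ParityGame V) : Justification G :=
  ⟨fun _ _ => False, G.Hd⟩

/-!
A parameter of `w` in `J[v : dj, α]` is either a parameter of `w` in `J`, or it is reached from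
`w` through `v` and then an edge `(v, z) ∈ dj`; its priority is then at least
`jl z ≥ jl dj ≥ jl v ≥ jl w`. Since `dj` is nonempty, `v` itself is no parameter any more.
-/

theorem IsDJ.exists_mem {v : V} {α : Fin 2} {dj : Set (V × V)} (h : G.IsDJ v α dj) :
    ∃ z, (v, z) ∈ dj := by
  by_cases ho : G.owner v = α
  · obtain ⟨z, -, rfl⟩ := h.1 ho
    exact ⟨z, rfl⟩
  · obtain ⟨z, hz⟩ := G.exists_succ v
    exact ⟨z, by rw [h.2 ho]; exact ⟨rfl, hz⟩⟩

namespace Justification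

variable (J : Justification G) {v : V} {dj : Set (V × V)} {α : Fin 2}

theorem jl_le_pr_of_mem_Par {x u : V} (h : u ∈ J.Par x) : J.jl x ≤ G.pr u :=
  sInf_le ⟨u, h, rfl⟩

theorem jl_le_jl_of_reaches {x y : V} (h : Reaches J.D x y) : J.jl x ≤ J.jl y :=
  sInf_le_sInf (Set.image_mono fun _ hu => ⟨h.trans hu.1, hu.2⟩)

theorem jlDJ_le_jl_of_mem {z : V} (h : (v, z) ∈ dj) : J.jlDJ dj ≤ J.jl z :=
  sInf_le ⟨(v, z), h, rfl⟩

theorem update_justified_self {z : V} (h : (v, z) ∈ dj) : (J.update v dj α).Justified v :=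
  ⟨z, by simpa [update] using h⟩

theorem update_justified_of_ne {u : V} (hu : u ≠ v) :
    (J.update v dj α).Justified u ↔ J.Justified u := by
  simp [Justified, update, hu]

/-- A path that uses a new edge is split at its first visit to `v` and at its last edge out
of `v`. -/
theorem reaches_update {x u : V} (h : Reaches (J.update v dj α).D x u) :
    Reaches J.D x u ∨ Reaches J.D x v ∧ ∃ z, (v, z) ∈ dj ∧ Reaches J.D z u := by
  induction h using Relation.ReflTransGen.head_induction_on with
  | refl => exact Or.inl .refl
  | @head a c hac _ ih =>
    by_cases ha : a = v
    · subst ha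
      have hdj : (a, c) ∈ dj := by simpa [update] using hac
      rcases ih with hcu | ⟨-, z, hz, hzu⟩
      · exact Or.inr ⟨.refl, c, hdj, hcu⟩
      · exact Or.inr ⟨.refl, z, hz, hzu⟩
    · have hD : J.D a c := by simpa [update, ha] using hac
      rcases ih with hcu | ⟨hcv, hz⟩
      · exact Or.inl (.head hD hcu)
      · exact Or.inr ⟨.head hD hcv, hz⟩

theorem Par_update_subset {z₀ : V} (hz₀ : (v, z₀) ∈ dj) (x : V) :
    (J.update v dj α).Par x ⊆
      J.Par x ∪ {u | Reaches J.D x v ∧ ∃ z, (v, z) ∈ dj ∧ u ∈ J.Par z} := by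
  rintro u ⟨hxu, hu⟩
  have hne : u ≠ v := by
    rintro rfl
    exact hu (J.update_justified_self hz₀)
  rw [J.update_justified_of_ne hne] at hu
  rcases J.reaches_update hxu with hxu | ⟨hxv, z, hz, hzu⟩
  · exact Or.inl ⟨hxu, hu⟩
  · exact Or.inr ⟨hxv, z, hz, hzu, hu⟩

theorem jl_le_jl_update {z₀ : V} (hz₀ : (v, z₀) ∈ dj) (hlev : J.jl v ≤ J.jlDJ dj) (w : V) :
    J.jl w ≤ (J.update v dj α).jl w := by
  refine le_sInf (Set.forall_mem_image.2 fun u hu => ?_)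
  rcases J.Par_update_subset hz₀ w hu with hu | ⟨hwv, z, hz, hu⟩
  · exact J.jl_le_pr_of_mem_Par hu
  · calc J.jl w ≤ J.jl v := J.jl_le_jl_of_reaches hwv
      _ ≤ J.jlDJ dj := hlev
      _ ≤ J.jl z := J.jlDJ_le_jl_of_mem hz
      _ ≤ G.pr u := J.jl_le_pr_of_mem_Par hu

end Justification

theorem stmt_15_general {V : Type*} {G : ParityGame V}
    (J : Justification G) (v : V) (dj : Set (V × V))
    (hwin : G.WinsDJ J.H v (J.H v) dj)
    (hlev : if J.Justified v then J.jl v < J.jlDJ dj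
            else J.jl v ≤ J.jlDJ dj) :
    ∀ w, J.jl w ≤ (J.update v dj (J.H v)).jl w := by
  obtain ⟨z₀, hz₀⟩ := hwin.1.exists_mem
  have hjlv : J.jl v ≤ J.jlDJ dj := by
    split_ifs at hlev
    exacts [hlev.le, hlev]
  exact J.jl_le_jl_update hz₀ hjlv

/-- if `J₀` is safe and `J = J₀[v : dj, α]` results from an
executable `Justify` step in the case `H v = α` (i.e. `dj` wins `v` for
`H v` under `H` and `jl(dj) ≥ jl(v)` if `v` is unjustified, `jl(dj) > jl(v)`
if `v` is justified), then no node's justification level decreases. -/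
theorem stmt_15 {V : Type*} [Fintype V] {G : ParityGame V}
    (J : Justification G) (hsafe : J.Safe) (v : V) (dj : Set (V × V))
    (hwin : G.WinsDJ J.H v (J.H v) dj)
    (hlev : if J.Justified v then J.jl v < J.jlDJ dj
            else J.jl v ≤ J.jlDJ dj) :
    ∀ w, J.jl w ≤ (J.update v dj (J.H v)).jl w :=
  stmt_15_general J v dj hwin hlev

end ParityGame

end
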